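/- arXiv:2007.14505 — 2 statements merged into one kernel-verified Lean document; each statement's English description precedes it below -/
import Mathlib

section
/- Let U be an n-molecule in an oriented graded poset with n > 0, and let x ∈ U with dim x = n−1. Then: (1) if x ∈ Δ^+U ∩ Δ^−U, x is covered by no element of U; (2) if x ∈ Δ^+U ∪ Δ^−U but not in both, x is covered by exactly one element of U; (3) if x ∉ Δ^+U ∪ Δ^−U, x is covered by exactly two elements of U, with opposite orientations. -/
/-- An oriented graded poset: a finite graded poset together with an
orientation (edge-labelling of the Hasse diagram in `Bool`, `true` = `+`,
`false` = `-`).  `orient y x` is the label of the edge `y → x` when `x ⋖ y`. -/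
structure OGP where
  carrier : Type
  [po : PartialOrder carrier]
  [fin : Finite carrier]
  dim : carrier → ℕ
  graded : ∀ x y : carrier, x ⋖ y → dim y = dim x + 1
  min_dim : ∀ x : carrier, IsMin x → dim x = 0
  orient : carrier → carrier → Bool

attribute [instance] OGP.po OGP.fin

namespace OGP

variable (P : OGP)

/-- Downward closure of a subset. -/
def cl (U : Set P.carrier) : Set P.carrier := {x | ∃ y ∈ U, x ≤ y}

/-- A subset is closed if it is downward closed. -/
def IsClosed (U : Set P.carrier) : Prop := P.cl U ⊆ U

/-- `Δₙ^α U`: the `n`-dimensional elements of `U` all of whose covering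
elements in `U` cover with sign `α`. -/
def sb (n : ℕ) (α : Bool) (U : Set P.carrier) : Set P.carrier :=
  {x | x ∈ U ∧ P.dim x = n ∧ ∀ y ∈ U, x ⋖ y → P.orient y x = α}

/-- The boundary `∂ₙ^α U`. -/
def bd (n : ℕ) (α : Bool) (U : Set P.carrier) : Set P.carrier :=
  P.cl (P.sb n α U) ∪ {x | x ∈ U ∧ ∀ y ∈ U, x ≤ y → P.dim y ≤ n}

/-- Dimension of a subset (the maximum of the dimensions of its elements;
`0` if empty). -/
noncomputable def sdim (U : Set P.carrier) : ℕ := sSup (P.dim '' U)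

end OGP

/-- A map of oriented graded posets: a function commuting with all boundary
operators `∂ₙ^α` on closures of points. -/
def IsMap (P Q : OGP) (f : P.carrier → Q.carrier) : Prop :=
  ∀ (x : P.carrier) (n : ℕ) (α : Bool),
    Q.bd n α (Q.cl {f x}) = f '' (P.bd n α (P.cl {x}))

/-- Molecules in an oriented graded poset, defined inductively: atoms
(closed subsets with a greatest element), and pastings `U₁ ∪ U₂` of two
molecules properly contained in the union with
`U₁ ∩ U₂ = ∂ₖ^+ U₁ = ∂ₖ^- U₂`. -/
inductive IsMolecule (P : OGP) : Set P.carrier → Prop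
  | atom : ∀ U : Set P.carrier, P.IsClosed U → (∃ x ∈ U, ∀ y ∈ U, y ≤ x) →
      IsMolecule P U
  | paste : ∀ (U₁ U₂ : Set P.carrier) (k : ℕ),
      IsMolecule P U₁ → IsMolecule P U₂ →
      U₁ ∩ U₂ = P.bd k true U₁ → U₁ ∩ U₂ = P.bd k false U₂ →
      U₁ ≠ U₁ ∪ U₂ → U₂ ≠ U₁ ∪ U₂ →
      IsMolecule P (U₁ ∪ U₂)

/-- `∂^α x`: the boundary of the closure of a single element. -/
def OGP.bdx (P : OGP) (α : Bool) (x : P.carrier) : Set P.carrier :=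
  P.bd (P.dim x - 1) α (P.cl {x})

/-- A directed complex: every `∂^α x` is a molecule, and globularity holds. -/
def IsDirectedComplex (P : OGP) : Prop :=
  ∀ (x : P.carrier) (α : Bool),
    IsMolecule P (P.bdx α x) ∧
    (1 < P.dim x → ∀ β : Bool,
      P.bd (P.dim x - 2) α (P.bdx β x) = P.bd (P.dim x - 2) α (P.cl {x}))

/-- An `n`-molecule `U` has spherical boundary iff for all `k < n`,
`∂ₖ^+ U ∩ ∂ₖ^- U = ∂ₖ₋₁ U` (for `k = 0` the right-hand side is empty). -/
def HasSphericalBoundary (P : OGP) (n : ℕ) (U : Set P.carrier) : Prop :=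
  (∀ k : ℕ, 0 < k → k < n →
      P.bd k true U ∩ P.bd k false U = P.bd (k - 1) true U ∪ P.bd (k - 1) false U) ∧
  (0 < n → P.bd 0 true U ∩ P.bd 0 false U = ∅)

/-- A regular directed complex: a directed complex all of whose atoms have
spherical boundary. -/
def IsRegularDC (P : OGP) : Prop :=
  IsDirectedComplex P ∧ ∀ x : P.carrier, HasSphericalBoundary P (P.dim x) (P.cl {x})

section Aux

variable {P : OGP}

lemma OGP.dim_lt_of_lt : ∀ x y : P.carrier, x < y → P.dim x < P.dim y := by
  have wf : WellFounded ((· > ·) : P.carrier → P.carrier → Prop) := wellFounded_gt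
  intro x
  induction x using wf.induction with
  | _ x ih =>
    intro y hxy
    obtain ⟨z, hz, hzy⟩ := exists_covBy_le_of_lt hxy
    rcases eq_or_lt_of_le hzy with rfl | h
    · rw [P.graded _ _ hz]; omega
    · have h1 := ih z hz.lt y h
      have h2 := P.graded _ _ hz
      omega

lemma OGP.dim_le_of_le {x y : P.carrier} (h : x ≤ y) : P.dim x ≤ P.dim y := by
  rcases eq_or_lt_of_le h with rfl | h
  · exact le_rfl
  · exact (OGP.dim_lt_of_lt x y h).le

lemma OGP.eq_of_le_of_dim_le {x y : P.carrier} (h : x ≤ y) (hd : P.dim y ≤ P.dim x) :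
    x = y := by
  rcases eq_or_lt_of_le h with rfl | h
  · rfl
  · exact absurd (OGP.dim_lt_of_lt x y h) (by omega)

lemma IsMolecule.closed {U : Set P.carrier} (h : IsMolecule P U) : P.IsClosed U := by
  induction h with
  | atom U hcl _ => exact hcl
  | paste U₁ U₂ k _ _ _ _ _ _ ih1 ih2 =>
    rintro a ⟨y, hy | hy, hle⟩
    · exact Or.inl (ih1 ⟨y, hy, hle⟩)
    · exact Or.inr (ih2 ⟨y, hy, hle⟩)

lemma OGP.exists_cover_of_not_sb {U : Set P.carrier} {x : P.carrier} {n : ℕ} {α : Bool}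
    (hxU : x ∈ U) (hdx : P.dim x = n) (h : x ∉ P.sb n α U) :
    ∃ y ∈ U, x ⋖ y ∧ P.orient y x = !α := by
  by_contra hc
  push_neg at hc
  refine h ⟨hxU, hdx, fun y hy hcov => ?_⟩
  have := hc y hy hcov
  cases α <;> cases hh : P.orient y x <;> simp_all

/-- The key induction: parts (2) and (3) of the statement, by induction on the
molecule structure. -/
lemma OGP.key (U : Set P.carrier) (hU : IsMolecule P U) :
    ∀ n : ℕ, 0 < n → (∀ y ∈ U, P.dim y ≤ n) → ∀ x ∈ U, P.dim x = n - 1 →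
    ((x ∈ (P.sb (n - 1) true U ∪ P.sb (n - 1) false U) \
        (P.sb (n - 1) true U ∩ P.sb (n - 1) false U) →
      ∃! y : P.carrier, y ∈ U ∧ x ⋖ y) ∧
    (x ∉ P.sb (n - 1) true U ∪ P.sb (n - 1) false U →
      ∃ y z : P.carrier, y ∈ U ∧ z ∈ U ∧ x ⋖ y ∧ x ⋖ z ∧ y ≠ z ∧
        P.orient y x = ! P.orient z x ∧ ∀ w ∈ U, x ⋖ w → w = y ∨ w = z)) := by
  induction hU with
  | atom U hcl hgr =>
    obtain ⟨x₀, hx₀U, hmax⟩ := hgr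
    intro n hn hd x hxU hdx
    -- helper: from any cover of `x` in `U`, deduce that `x₀` is the unique cover
    have huniq : ∀ y ∈ U, x ⋖ y → (x ⋖ x₀ ∧ ∀ w ∈ U, x ⋖ w → w = x₀) := by
      intro y hyU hcy
      have hdy : P.dim y = n := by rw [P.graded _ _ hcy]; omega
      have hd0 : P.dim x₀ = n :=
        le_antisymm (hd _ hx₀U) (hdy ▸ OGP.dim_le_of_le (hmax y hyU))
      have hyx₀ : y = x₀ := OGP.eq_of_le_of_dim_le (hmax y hyU) (by omega)
      subst hyx₀
      refine ⟨hcy, fun w hwU hcw => ?_⟩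
      have hdw : P.dim w = n := by rw [P.graded _ _ hcw]; omega
      exact OGP.eq_of_le_of_dim_le (hmax w hwU) (by omega)
    constructor
    · rintro ⟨hor, hnand⟩
      have hns : ∃ α : Bool, x ∉ P.sb (n - 1) α U := by
        rcases hor with h | h
        · exact ⟨false, fun h' => hnand ⟨h, h'⟩⟩
        · exact ⟨true, fun h' => hnand ⟨h', h⟩⟩
      obtain ⟨α, hα⟩ := hns
      obtain ⟨y, hyU, hcy, -⟩ := OGP.exists_cover_of_not_sb hxU hdx hα
      obtain ⟨hc0, hu⟩ := huniq y hyU hcy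
      exact ⟨x₀, ⟨hx₀U, hc0⟩, fun w ⟨hwU, hcw⟩ => hu w hwU hcw⟩
    · intro hh
      obtain ⟨y, hyU, hcy, -⟩ :=
        OGP.exists_cover_of_not_sb hxU hdx (fun h => hh (Or.inl h))
      obtain ⟨hc0, hu⟩ := huniq y hyU hcy
      exfalso
      refine hh ?_
      cases hor : P.orient x₀ x
      · exact Or.inr ⟨hxU, hdx, fun w hwU hcw => by rw [hu w hwU hcw, hor]⟩
      · exact Or.inl ⟨hxU, hdx, fun w hwU hcw => by rw [hu w hwU hcw, hor]⟩
  | paste U₁ U₂ k h1 h2 hb1 hb2 hne1 hne2 ih1 ih2 =>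
    intro n hn hd x hxU hdx
    have hcl1 : P.IsClosed U₁ := h1.closed
    have hcl2 : P.IsClosed U₂ := h2.closed
    -- k < n
    have hkn : k < n := by
      by_contra hk
      push_neg at hk
      apply hne2
      have hsub : U₁ ⊆ U₂ := by
        intro u hu
        have : u ∈ U₁ ∩ U₂ := by
          rw [hb1]
          exact Or.inr ⟨hu, fun y hy _ => le_trans (hd y (Or.inl hy)) hk⟩
        exact this.2
      rw [Set.union_eq_self_of_subset_left hsub]
    -- transfer lemma for the case x ∈ A \ B  (U = A ∪ B as sets)
    have transfer : ∀ (A B : Set P.carrier), A ∪ B = U₁ ∪ U₂ → P.IsClosed B →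
        x ∈ A → x ∉ B →
        ((x ∈ (P.sb (n - 1) true A ∪ P.sb (n - 1) false A) \
            (P.sb (n - 1) true A ∩ P.sb (n - 1) false A) →
          ∃! y : P.carrier, y ∈ A ∧ x ⋖ y) ∧
        (x ∉ P.sb (n - 1) true A ∪ P.sb (n - 1) false A →
          ∃ y z : P.carrier, y ∈ A ∧ z ∈ A ∧ x ⋖ y ∧ x ⋖ z ∧ y ≠ z ∧
            P.orient y x = ! P.orient z x ∧ ∀ w ∈ A, x ⋖ w → w = y ∨ w = z)) →
        ((x ∈ (P.sb (n - 1) true (U₁ ∪ U₂) ∪ P.sb (n - 1) false (U₁ ∪ U₂)) \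
            (P.sb (n - 1) true (U₁ ∪ U₂) ∩ P.sb (n - 1) false (U₁ ∪ U₂)) →
          ∃! y : P.carrier, y ∈ U₁ ∪ U₂ ∧ x ⋖ y) ∧
        (x ∉ P.sb (n - 1) true (U₁ ∪ U₂) ∪ P.sb (n - 1) false (U₁ ∪ U₂) →
          ∃ y z : P.carrier, y ∈ U₁ ∪ U₂ ∧ z ∈ U₁ ∪ U₂ ∧ x ⋖ y ∧ x ⋖ z ∧ y ≠ z ∧
            P.orient y x = ! P.orient z x ∧
            ∀ w ∈ U₁ ∪ U₂, x ⋖ w → w = y ∨ w = z)) := by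
      intro A B hAB hclB hxA hxB ⟨pA2, pA3⟩
      -- every element of U₁ ∪ U₂ above x lies in A
      have hmemA : ∀ y ∈ U₁ ∪ U₂, x ≤ y → y ∈ A := by
        intro y hy hle
        have hyAB : y ∈ A ∪ B := hAB ▸ hy
        rcases hyAB with h | h
        · exact h
        · exact absurd (hclB ⟨y, h, hle⟩) hxB
      have hsb : ∀ α, x ∈ P.sb (n - 1) α (U₁ ∪ U₂) ↔ x ∈ P.sb (n - 1) α A := by
        intro α
        constructor
        · rintro ⟨-, hdx', hall⟩
          refine ⟨hxA, hdx', fun y hy hc => hall y ?_ hc⟩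
          have : y ∈ A ∪ B := Or.inl hy
          exact hAB ▸ this
        · rintro ⟨-, hdx', hall⟩
          exact ⟨hxU, hdx', fun y hy hc => hall y (hmemA y hy hc.le) hc⟩
      constructor
      · rintro ⟨hor, hnand⟩
        have hor' : x ∈ P.sb (n - 1) true A ∪ P.sb (n - 1) false A := by
          rcases hor with h | h
          · exact Or.inl ((hsb true).mp h)
          · exact Or.inr ((hsb false).mp h)
        have hnand' : x ∉ P.sb (n - 1) true A ∩ P.sb (n - 1) false A := by
          rintro ⟨h₁, h₂⟩
          exact hnand ⟨(hsb true).mpr h₁, (hsb false).mpr h₂⟩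
        obtain ⟨y, ⟨hyA, hcy⟩, hu⟩ := pA2 ⟨hor', hnand'⟩
        refine ⟨y, ⟨hAB ▸ (Or.inl hyA : y ∈ A ∪ B), hcy⟩, ?_⟩
        rintro w ⟨hwU, hcw⟩
        exact hu w ⟨hmemA w hwU hcw.le, hcw⟩
      · intro hh
        have hh' : x ∉ P.sb (n - 1) true A ∪ P.sb (n - 1) false A := by
          rintro (h | h)
          · exact hh (Or.inl ((hsb true).mpr h))
          · exact hh (Or.inr ((hsb false).mpr h))
        obtain ⟨y, z, hyA, hzA, hcy, hcz, hne, hor, hall⟩ := pA3 hh'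
        exact ⟨y, z, hAB ▸ (Or.inl hyA : y ∈ A ∪ B), hAB ▸ (Or.inl hzA : z ∈ A ∪ B),
          hcy, hcz, hne, hor,
          fun w hwU hcw => hall w (hmemA w hwU hcw.le) hcw⟩
    by_cases hx2 : x ∈ U₂
    · by_cases hx1 : x ∈ U₁
      · -- x ∈ U₁ ∩ U₂ : the pasting boundary
        have hx12 : x ∈ U₁ ∩ U₂ := ⟨hx1, hx2⟩
        -- dim x ≤ k
        have hdk : P.dim x ≤ k := by
          have hb : x ∈ P.bd k true U₁ := hb1 ▸ hx12
          rcases hb with ⟨z, hz, hxz⟩ | ⟨-, hall⟩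
          · exact hz.2.1 ▸ OGP.dim_le_of_le hxz
          · exact hall x hx1 le_rfl
        have hk : k = n - 1 := by omega
        subst hk
        -- x ∈ Δ⁺ U₁
        have hA : x ∈ P.sb (n - 1) true U₁ := by
          have hb : x ∈ P.bd (n - 1) true U₁ := hb1 ▸ hx12
          rcases hb with ⟨z, hz, hxz⟩ | ⟨-, hall⟩
          · have hdz := hz.2.1
            have : x = z := OGP.eq_of_le_of_dim_le hxz (by omega)
            exact this ▸ hz
          · refine ⟨hx1, hdx, fun y hy hc => absurd (hall y hy hc.le) ?_⟩
            rw [P.graded _ _ hc]; omega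
        -- x ∈ Δ⁻ U₂
        have hB : x ∈ P.sb (n - 1) false U₂ := by
          have hb : x ∈ P.bd (n - 1) false U₂ := hb2 ▸ hx12
          rcases hb with ⟨z, hz, hxz⟩ | ⟨-, hall⟩
          · have hdz := hz.2.1
            have : x = z := OGP.eq_of_le_of_dim_le hxz (by omega)
            exact this ▸ hz
          · refine ⟨hx2, hdx, fun y hy hc => absurd (hall y hy hc.le) ?_⟩
            rw [P.graded _ _ hc]; omega
        have hd1 : ∀ y ∈ U₁, P.dim y ≤ n := fun y hy => hd y (Or.inl hy)
        have hd2 : ∀ y ∈ U₂, P.dim y ≤ n := fun y hy => hd y (Or.inr hy)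
        constructor
        · rintro ⟨hor, hnand⟩
          rcases hor with hsbt | hsbf
          · -- all covers of x in U are positive, so there are none in U₂
            have hxf : x ∉ P.sb (n - 1) false (U₁ ∪ U₂) := fun h => hnand ⟨hsbt, h⟩
            obtain ⟨y, hyU, hcy, hoy⟩ := OGP.exists_cover_of_not_sb hxU hdx hxf
            simp only [Bool.not_false] at hoy
            have hy1 : y ∈ U₁ := by
              rcases hyU with h | h
              · exact h
              · exact absurd (hB.2.2 y h hcy) (by rw [hoy]; simp)
            have hx1f : x ∉ P.sb (n - 1) false U₁ := fun h =>
              absurd (h.2.2 y hy1 hcy) (by rw [hoy]; simp)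
            obtain ⟨w, ⟨hw1, hcw⟩, hu⟩ :=
              (ih1 n hn hd1 x hx1 hdx).1 ⟨Or.inl hA, fun h => hx1f h.2⟩
            refine ⟨w, ⟨Or.inl hw1, hcw⟩, ?_⟩
            rintro v ⟨hvU, hcv⟩
            have hv1 : v ∈ U₁ := by
              rcases hvU with h | h
              · exact h
              · have h1 := hB.2.2 v h hcv
                have h2 := hsbt.2.2 v (Or.inr h) hcv
                rw [h1] at h2; exact absurd h2 (by simp)
            exact hu v ⟨hv1, hcv⟩
          · -- all covers of x in U are negative, so there are none in U₁
            have hxt : x ∉ P.sb (n - 1) true (U₁ ∪ U₂) := fun h => hnand ⟨h, hsbf⟩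
            obtain ⟨y, hyU, hcy, hoy⟩ := OGP.exists_cover_of_not_sb hxU hdx hxt
            simp only [Bool.not_true] at hoy
            have hy2 : y ∈ U₂ := by
              rcases hyU with h | h
              · exact absurd (hA.2.2 y h hcy) (by rw [hoy]; simp)
              · exact h
            have hx2t : x ∉ P.sb (n - 1) true U₂ := fun h =>
              absurd (h.2.2 y hy2 hcy) (by rw [hoy]; simp)
            obtain ⟨w, ⟨hw2, hcw⟩, hu⟩ :=
              (ih2 n hn hd2 x hx2 hdx).1 ⟨Or.inr hB, fun h => hx2t h.1⟩
            refine ⟨w, ⟨Or.inr hw2, hcw⟩, ?_⟩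
            rintro v ⟨hvU, hcv⟩
            have hv2 : v ∈ U₂ := by
              rcases hvU with h | h
              · have h1 := hA.2.2 v h hcv
                have h2 := hsbf.2.2 v (Or.inl h) hcv
                rw [h1] at h2; exact absurd h2 (by simp)
              · exact h
            exact hu v ⟨hv2, hcv⟩
        · intro hh
          -- x ∉ Δ⁺ U : there is a negative cover, necessarily in U₂
          obtain ⟨z, hzU, hcz, hoz⟩ :=
            OGP.exists_cover_of_not_sb hxU hdx (fun h => hh (Or.inl h))
          simp only [Bool.not_true] at hoz
          have hz2 : z ∈ U₂ := by
            rcases hzU with h | h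
            · exact absurd (hA.2.2 z h hcz) (by rw [hoz]; simp)
            · exact h
          -- x ∉ Δ⁻ U : there is a positive cover, necessarily in U₁
          obtain ⟨y, hyU, hcy, hoy⟩ :=
            OGP.exists_cover_of_not_sb hxU hdx (fun h => hh (Or.inr h))
          simp only [Bool.not_false] at hoy
          have hy1 : y ∈ U₁ := by
            rcases hyU with h | h
            · exact h
            · exact absurd (hB.2.2 y h hcy) (by rw [hoy]; simp)
          have hd1 : ∀ u ∈ U₁, P.dim u ≤ n := fun u hu => hd u (Or.inl hu)
          have hd2 : ∀ u ∈ U₂, P.dim u ≤ n := fun u hu => hd u (Or.inr hu)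
          -- unique cover in U₁
          have hx1f : x ∉ P.sb (n - 1) false U₁ := fun h =>
            absurd (h.2.2 y hy1 hcy) (by rw [hoy]; simp)
          obtain ⟨y₁, ⟨hy₁1, hcy₁⟩, hu₁⟩ :=
            (ih1 n hn hd1 x hx1 hdx).1 ⟨Or.inl hA, fun h => hx1f h.2⟩
          -- unique cover in U₂
          have hx2t : x ∉ P.sb (n - 1) true U₂ := fun h =>
            absurd (h.2.2 z hz2 hcz) (by rw [hoz]; simp)
          obtain ⟨z₂, ⟨hz₂2, hcz₂⟩, hu₂⟩ :=
            (ih2 n hn hd2 x hx2 hdx).1 ⟨Or.inr hB, fun h => hx2t h.1⟩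
          have hoy₁ : P.orient y₁ x = true := hA.2.2 y₁ hy₁1 hcy₁
          have hoz₂ : P.orient z₂ x = false := hB.2.2 z₂ hz₂2 hcz₂
          refine ⟨y₁, z₂, Or.inl hy₁1, Or.inr hz₂2, hcy₁, hcz₂, ?_, ?_, ?_⟩
          · intro h; rw [h, hoz₂] at hoy₁; exact absurd hoy₁ (by simp)
          · rw [hoy₁, hoz₂]; rfl
          · intro w hwU hcw
            rcases hwU with h | h
            · exact Or.inl (hu₁ w ⟨h, hcw⟩)
            · exact Or.inr (hu₂ w ⟨h, hcw⟩)
      · -- x ∈ U₂ \ U₁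
        exact transfer U₂ U₁ (Set.union_comm _ _) hcl1 hx2 hx1
          (ih2 n hn (fun y hy => hd y (Or.inr hy)) x hx2 hdx)
    · -- x ∈ U₁ \ U₂
      have hx1 : x ∈ U₁ := by rcases hxU with h | h; exact h; exact absurd h hx2
      exact transfer U₁ U₂ rfl hcl2 hx1 hx2
        (ih1 n hn (fun y hy => hd y (Or.inl hy)) x hx1 hdx)

end Aux

/-- in an `n`-molecule (`n > 0`), an `(n-1)`-dimensional element
in `Δ⁺ ∩ Δ⁻` has no covering elements; one in `Δ⁺ ∪ Δ⁻` but not both is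
covered by exactly one element; one not in `Δ⁺ ∪ Δ⁻` is covered by exactly
two elements with opposite orientations. -/
theorem stmt6 (P : OGP) (U : Set P.carrier) (n : ℕ) (hn : 0 < n)
    (hU : IsMolecule P U) (hd : ∀ y ∈ U, P.dim y ≤ n) (he : ∃ y ∈ U, P.dim y = n)
    (x : P.carrier) (hx : x ∈ U) (hdx : P.dim x = n - 1) :
    (x ∈ P.sb (n - 1) true U ∩ P.sb (n - 1) false U → ∀ y ∈ U, ¬ x ⋖ y) ∧
    (x ∈ (P.sb (n - 1) true U ∪ P.sb (n - 1) false U) \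
        (P.sb (n - 1) true U ∩ P.sb (n - 1) false U) →
      ∃! y : P.carrier, y ∈ U ∧ x ⋖ y) ∧
    (x ∉ P.sb (n - 1) true U ∪ P.sb (n - 1) false U →
      ∃ y z : P.carrier, y ∈ U ∧ z ∈ U ∧ x ⋖ y ∧ x ⋖ z ∧ y ≠ z ∧
        P.orient y x = ! P.orient z x ∧ ∀ w ∈ U, x ⋖ w → w = y ∨ w = z) := by
  obtain ⟨p2, p3⟩ := OGP.key U hU n hn hd x hx hdx
  refine ⟨?_, p2, p3⟩
  rintro ⟨hp, hm⟩ y hy hc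
  have h1 := hp.2.2 y hy hc
  have h2 := hm.2.2 y hy hc
  rw [h1] at h2
  exact absurd h2 (by simp)
end

section
/- Let U, V be molecules with spherical boundary in regular directed complexes. Then their Gray product U ⊗ V has spherical boundary; in particular, for all k < dim U + dim V, ∂ₖ^+(U ⊗ V) ∩ ∂ₖ^−(U ⊗ V) = ∂ₖ₋₁(U ⊗ V). -/
open Classical in
/-- The Gray product of oriented graded posets. -/
noncomputable def gray (P Q : OGP) : OGP where
  carrier := P.carrier × Q.carrier
  po := inferInstance
  fin := inferInstance
  dim := fun z => P.dim z.1 + Q.dim z.2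
  graded := by
    rintro x y h
    rcases Prod.covBy_iff.mp h with ⟨h1, h2⟩ | ⟨h1, h2⟩
    · show P.dim y.1 + Q.dim y.2 = P.dim x.1 + Q.dim x.2 + 1
      rw [P.graded _ _ h1, ← h2]; ring
    · show P.dim y.1 + Q.dim y.2 = P.dim x.1 + Q.dim x.2 + 1
      rw [Q.graded _ _ h1, ← h2]; ring
  min_dim := by
    intro x hx
    rcases Prod.isMin_iff.mp hx with ⟨h1, h2⟩
    show P.dim x.1 + Q.dim x.2 = 0
    rw [P.min_dim _ h1, Q.min_dim _ h2]
  orient := fun y x =>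
    if y.2 = x.2 then P.orient y.1 x.1
    else if P.dim y.1 % 2 = 0 then Q.orient y.2 x.2 else ! Q.orient y.2 x.2

/-!
Spherical boundary makes the boundaries of `U` increasing: `∂ᵢ^α U ⊆ ∂ⱼ^β U` for `i < j`, and
`∂ᵢ^α U = U` for `i ≥ dim U`. This is what is needed to prove Steiner's formula for the
boundaries of `U × V`. Now let `z` lie in `∂ᵢ^+ U × ∂ⱼ^± V` and in `∂ᵢ'^- U × ∂ⱼ'^± V`, with
`i + j = i' + j' = k + 1`. If `i < i'`, then `j' ≤ j - 1`, so the second membership gives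
`z.2 ∈ ∂ⱼ₋₁ V` with the sign needed to put `z` in `∂ₖ^+ (U × V)` via `∂ᵢ^+ U`; symmetrically if
`i' < i`. If `i = i'`, both coordinates lie in both boundaries of their dimension, and the
spherical boundary of whichever factor has `i < dim U` (or `j < dim V`) lowers that index by one.
-/

namespace OGP

variable {P : OGP}

/-- The part of `∂ₖ^α U` that does not depend on `α`. -/
def lowPart (P : OGP) (k : ℕ) (U : Set P.carrier) : Set P.carrier :=
  {x | x ∈ U ∧ ∀ y ∈ U, x ≤ y → P.dim y ≤ k}

lemma lowPart_mono {U : Set P.carrier} {k l : ℕ} (h : k ≤ l) : P.lowPart k U ⊆ P.lowPart l U :=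
  fun _ hx => ⟨hx.1, fun y hy hxy => (hx.2 y hy hxy).trans h⟩

lemma IsClosed.bd_subset {U : Set P.carrier} (hU : P.IsClosed U) (k : ℕ) (α : Bool) :
    P.bd k α U ⊆ U := by
  rintro x (⟨y, hy, hxy⟩ | hx)
  exacts [hU ⟨y, hy.1, hxy⟩, hx.1]

lemma dim_strictMono : StrictMono P.dim := by
  intro x y hxy
  induction y using WellFoundedLT.induction with
  | _ y IH =>
    obtain ⟨z, hxz, hzy⟩ := exists_le_covBy_of_lt hxy
    rw [P.graded z y hzy]
    rcases hxz.eq_or_lt with rfl | hxz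
    · omega
    · have := IH z hzy.lt hxz
      omega

lemma exists_maximal_ge_mem_lowPart {U : Set P.carrier} {x : P.carrier} (hx : x ∈ U) :
    ∃ b, x ≤ b ∧ Maximal (· ∈ U) b ∧ x ∈ P.lowPart (P.dim b) U := by
  obtain ⟨b, ⟨hxb, hbU⟩, hmax⟩ :=
    (Set.toFinite {z | x ≤ z ∧ z ∈ U}).exists_maximalFor P.dim _ ⟨x, le_rfl, hx⟩
  have hdim : ∀ y ∈ U, x ≤ y → P.dim y ≤ P.dim b := fun y hy hxy =>
    le_of_not_gt fun h => (hmax ⟨hxy, hy⟩ h.le).not_gt h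
  refine ⟨b, hxb, ⟨hbU, fun y hy hby => ?_⟩, hx, hdim⟩
  rcases hby.eq_or_lt with rfl | hlt
  · exact le_rfl
  · exact absurd (hdim y hy (hxb.trans hby)) (dim_strictMono hlt).not_ge

lemma maximal_mem_sb {U : Set P.carrier} {b : P.carrier} (hb : Maximal (· ∈ U) b) (α : Bool) :
    b ∈ P.sb (P.dim b) α U :=
  ⟨hb.1, rfl, fun _ hy hby => absurd (hb.2 hy hby.le) hby.lt.not_ge⟩

end OGP

lemma IsMolecule.isClosed {P : OGP} {U : Set P.carrier} (h : IsMolecule P U) : P.IsClosed U := by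
  induction h with
  | atom U hU _ => exact hU
  | paste U₁ U₂ _ _ _ _ _ _ _ IH₁ IH₂ =>
    rintro x ⟨y, hy | hy, hxy⟩
    exacts [Or.inl (IH₁ ⟨y, hy, hxy⟩), Or.inr (IH₂ ⟨y, hy, hxy⟩)]

structure IsClosedSpherical (P : OGP) (n : ℕ) (U : Set P.carrier) : Prop where
  isClosed : P.IsClosed U
  dim_le : ∀ x ∈ U, P.dim x ≤ n
  spherical : HasSphericalBoundary P n U

namespace IsClosedSpherical

variable {P : OGP} {n : ℕ} {U : Set P.carrier}

lemma bd_eq_self (hU : IsClosedSpherical P n U) {k : ℕ} (h : n ≤ k) (α : Bool) :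
    P.bd k α U = U :=
  (hU.isClosed.bd_subset k α).antisymm fun _ hx =>
    Or.inr ⟨hx, fun y hy _ => (hU.dim_le y hy).trans h⟩

lemma bd_succ_inter_bd_succ (hU : IsClosedSpherical P n U) {i : ℕ} (hi : i + 1 < n) :
    P.bd (i + 1) true U ∩ P.bd (i + 1) false U = P.bd i true U ∪ P.bd i false U :=
  hU.spherical.1 (i + 1) i.succ_pos hi

lemma bd_subset_bd_succ (hU : IsClosedSpherical P n U) (i : ℕ) (α β : Bool) :
    P.bd i α U ⊆ P.bd (i + 1) β U := by
  by_cases h : i + 1 < n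
  · intro x hx
    have hx' : x ∈ P.bd (i + 1) true U ∩ P.bd (i + 1) false U := by
      rw [hU.bd_succ_inter_bd_succ h]
      cases α
      exacts [Or.inr hx, Or.inl hx]
    cases β
    exacts [hx'.2, hx'.1]
  · rw [hU.bd_eq_self (k := i + 1) (by omega)]
    exact hU.isClosed.bd_subset i α

lemma bd_subset_bd (hU : IsClosedSpherical P n U) {i j : ℕ} (h : i < j) (α β : Bool) :
    P.bd i α U ⊆ P.bd j β U := by
  induction j with
  | zero => omega
  | succ j IH =>
    rcases Nat.lt_succ_iff_lt_or_eq.mp h with h | rfl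
    · exact (IH h).trans (hU.bd_subset_bd_succ j β β)
    · exact hU.bd_subset_bd_succ i α β

lemma exists_mem_bd_pred_of_mem_inter (hU : IsClosedSpherical P n U) {i : ℕ} {x : P.carrier}
    (hi : i < n) (hxp : x ∈ P.bd i true U) (hxn : x ∈ P.bd i false U) :
    ∃ i', i = i' + 1 ∧ ∃ γ, x ∈ P.bd i' γ U := by
  obtain _ | i := i
  · exact absurd ((hU.spherical.2 hi).subset ⟨hxp, hxn⟩) (Set.notMem_empty x)
  · have hx : x ∈ P.bd i true U ∪ P.bd i false U := by
      rw [← hU.bd_succ_inter_bd_succ hi]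
      exact ⟨hxp, hxn⟩
    rcases hx with hx | hx
    exacts [⟨i, rfl, _, hx⟩, ⟨i, rfl, _, hx⟩]

end IsClosedSpherical

/-- The sign `(-1)^i α`, with `true` standing for `+`. -/
def twist (i : ℕ) (α : Bool) : Bool := if i % 2 = 0 then α else !α

lemma twist_twist (i : ℕ) (α : Bool) : twist i (twist i α) = α := by
  unfold twist; split <;> simp

lemma twist_not (i : ℕ) (α : Bool) : twist i (!α) = !twist i α := by
  unfold twist; split <;> simp

lemma twist_succ (i : ℕ) (α : Bool) : twist (i + 1) α = !twist i α := by
  unfold twist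
  rcases Nat.mod_two_eq_zero_or_one i with h | h <;> simp [h, Nat.add_mod]

lemma forall_of_twist_true_of_twist_false {p : Bool → Prop} (i : ℕ)
    (hp : p (twist i true)) (hn : p (twist i false)) (γ : Bool) : p γ := by
  rw [← twist_twist i γ]
  cases twist i γ
  exacts [hn, hp]

section Gray

variable {P Q : OGP} {U : Set P.carrier} {V : Set Q.carrier}

lemma gray_orient_of_snd_eq {z w : P.carrier × Q.carrier} (h : w.2 = z.2) :
    (gray P Q).orient w z = P.orient w.1 z.1 :=
  if_pos h

lemma gray_orient_of_snd_ne {z w : P.carrier × Q.carrier} (h : w.2 ≠ z.2) :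
    (gray P Q).orient w z = twist (P.dim w.1) (Q.orient w.2 z.2) :=
  if_neg h

lemma mem_gray_sb_iff {k : ℕ} {α : Bool} {z : P.carrier × Q.carrier} :
    z ∈ (gray P Q).sb k α (U ×ˢ V) ↔
      z.1 ∈ P.sb (P.dim z.1) α U ∧ z.2 ∈ Q.sb (Q.dim z.2) (twist (P.dim z.1) α) V ∧
        P.dim z.1 + Q.dim z.2 = k := by
  constructor
  · rintro ⟨⟨hz₁, hz₂⟩, hdim, hcov⟩
    refine ⟨⟨hz₁, rfl, fun y hy hc => ?_⟩, ⟨hz₂, rfl, fun y hy hc => ?_⟩, hdim⟩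
    · have := hcov (y, z.2) ⟨hy, hz₂⟩ (Prod.covBy_iff.mpr (Or.inl ⟨hc, rfl⟩))
      rwa [gray_orient_of_snd_eq (z := z) (w := (y, z.2)) rfl] at this
    · have := hcov (z.1, y) ⟨hz₁, hy⟩ (Prod.covBy_iff.mpr (Or.inr ⟨hc, rfl⟩))
      rw [gray_orient_of_snd_ne hc.lt.ne'] at this
      rw [← this, twist_twist]
  · rintro ⟨⟨hz₁, -, hcov₁⟩, ⟨hz₂, -, hcov₂⟩, hdim⟩
    refine ⟨⟨hz₁, hz₂⟩, hdim, fun w hw hcv => ?_⟩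
    rcases Prod.covBy_iff.mp hcv with ⟨hc, he⟩ | ⟨hc, he⟩
    · rw [gray_orient_of_snd_eq he.symm]
      exact hcov₁ w.1 hw.1 hc
    · rw [gray_orient_of_snd_ne hc.lt.ne', ← he, hcov₂ w.2 hw.2 hc, twist_twist]

lemma mem_gray_lowPart_iff {k : ℕ} {z : P.carrier × Q.carrier} :
    z ∈ (gray P Q).lowPart k (U ×ˢ V) ↔
      ∃ i j, i + j = k ∧ z.1 ∈ P.lowPart i U ∧ z.2 ∈ Q.lowPart j V := by
  constructor
  · rintro ⟨⟨hz₁, hz₂⟩, hbound⟩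
    obtain ⟨a, hza, ha, ha'⟩ := OGP.exists_maximal_ge_mem_lowPart hz₁
    obtain ⟨b, hzb, hb, hb'⟩ := OGP.exists_maximal_ge_mem_lowPart hz₂
    have hab : P.dim a + Q.dim b ≤ k := hbound (a, b) ⟨ha.1, hb.1⟩ ⟨hza, hzb⟩
    exact ⟨P.dim a, k - P.dim a, by omega, ha', OGP.lowPart_mono (by omega) hb'⟩
  · rintro ⟨i, j, rfl, ⟨hz₁, h₁⟩, ⟨hz₂, h₂⟩⟩
    exact ⟨⟨hz₁, hz₂⟩, fun y hy hzy => Nat.add_le_add (h₁ y.1 hy.1 hzy.1) (h₂ y.2 hy.2 hzy.2)⟩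

/-- The set `⋃_{i + j = k} ∂ᵢ^α U × ∂ⱼ^{(-1)^i α} V` of Steiner's boundary formula. -/
def grayBd (P Q : OGP) (k : ℕ) (α : Bool) (U : Set P.carrier) (V : Set Q.carrier) :
    Set (P.carrier × Q.carrier) :=
  {z | ∃ i j, i + j = k ∧ z.1 ∈ P.bd i α U ∧ z.2 ∈ Q.bd j (twist i α) V}

lemma gray_bd_subset_grayBd (k : ℕ) (α : Bool) :
    (gray P Q).bd k α (U ×ˢ V) ⊆ grayBd P Q k α U V := by
  rintro z (⟨w, hw, hzw⟩ | hz)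
  · obtain ⟨hw₁, hw₂, hdim⟩ := mem_gray_sb_iff.mp hw
    exact ⟨_, _, hdim, Or.inl ⟨w.1, hw₁, hzw.1⟩, Or.inl ⟨w.2, hw₂, hzw.2⟩⟩
  · obtain ⟨i, j, hij, h₁, h₂⟩ := mem_gray_lowPart_iff.mp hz
    exact ⟨i, j, hij, Or.inr h₁, Or.inr h₂⟩

lemma mem_gray_bd_of_mem_cl_sb {i j : ℕ} {α : Bool} {z : P.carrier × Q.carrier}
    (h₁ : z.1 ∈ P.cl (P.sb i α U)) (h₂ : z.2 ∈ Q.cl (Q.sb j (twist i α) V)) :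
    z ∈ (gray P Q).bd (i + j) α (U ×ˢ V) := by
  obtain ⟨x, ⟨hxU, rfl, hx⟩, hzx⟩ := h₁
  obtain ⟨y, ⟨hyV, rfl, hy⟩, hzy⟩ := h₂
  exact Or.inl ⟨(x, y), mem_gray_sb_iff.mpr ⟨⟨hxU, rfl, hx⟩, ⟨hyV, rfl, hy⟩, rfl⟩, hzx, hzy⟩

/- In the mixed cases the `lowPart` factor lies below a maximal element, which is in `Δ^β`
for both signs `β`. -/
lemma mem_gray_bd_of_mem_lowPart_right {n : ℕ} (hU : IsClosedSpherical P n U)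
    {i j : ℕ} {α : Bool} {z : P.carrier × Q.carrier}
    (h₁ : z.1 ∈ P.bd i α U) (h₂ : z.2 ∈ Q.lowPart j V) :
    z ∈ (gray P Q).bd (i + j) α (U ×ˢ V) := by
  obtain ⟨b, hzb, hb, hzb'⟩ := OGP.exists_maximal_ge_mem_lowPart h₂.1
  have hbj : Q.dim b ≤ j := h₂.2 b hb.1 hzb
  have h₁' : z.1 ∈ P.bd (i + j - Q.dim b) α U := by
    rcases hbj.lt_or_eq with hlt | rfl
    · exact hU.bd_subset_bd (by omega) α α h₁
    · rwa [Nat.add_sub_cancel]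
  rcases h₁' with h₁' | h₁'
  · have := mem_gray_bd_of_mem_cl_sb h₁' ⟨b, OGP.maximal_mem_sb hb _, hzb⟩
    rwa [Nat.sub_add_cancel (by omega)] at this
  · exact Or.inr (mem_gray_lowPart_iff.mpr ⟨_, _, by omega, h₁', hzb'⟩)

lemma mem_gray_bd_of_mem_lowPart_left {m : ℕ} (hV : IsClosedSpherical Q m V)
    {i j : ℕ} {α : Bool} {z : P.carrier × Q.carrier}
    (h₁ : z.1 ∈ P.lowPart i U) (h₂ : z.2 ∈ Q.bd j (twist i α) V) :
    z ∈ (gray P Q).bd (i + j) α (U ×ˢ V) := by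
  obtain ⟨a, hza, ha, hza'⟩ := OGP.exists_maximal_ge_mem_lowPart h₁.1
  have hai : P.dim a ≤ i := h₁.2 a ha.1 hza
  have h₂' : z.2 ∈ Q.bd (i + j - P.dim a) (twist (P.dim a) α) V := by
    rcases hai.lt_or_eq with hlt | rfl
    · exact hV.bd_subset_bd (by omega) _ _ h₂
    · rwa [Nat.add_sub_cancel_left]
  rcases h₂' with h₂' | h₂'
  · have := mem_gray_bd_of_mem_cl_sb ⟨a, OGP.maximal_mem_sb ha _, hza⟩ h₂'
    rwa [Nat.add_sub_cancel' (by omega)] at this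
  · exact Or.inr (mem_gray_lowPart_iff.mpr ⟨_, _, by omega, hza', h₂'⟩)

lemma gray_bd_eq_grayBd {n m : ℕ} (hU : IsClosedSpherical P n U)
    (hV : IsClosedSpherical Q m V) (k : ℕ) (α : Bool) :
    (gray P Q).bd k α (U ×ˢ V) = grayBd P Q k α U V := by
  refine (gray_bd_subset_grayBd k α).antisymm ?_
  rintro z ⟨i, j, rfl, h₁, h₂⟩
  rcases h₁ with h₁ | h₁
  · rcases h₂ with h₂ | h₂
    exacts [mem_gray_bd_of_mem_cl_sb h₁ h₂, mem_gray_bd_of_mem_lowPart_right hU (Or.inl h₁) h₂]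
  · exact mem_gray_bd_of_mem_lowPart_left hV h₁ h₂

end Gray

section GrayBd

variable {P Q : OGP} {n m : ℕ} {U : Set P.carrier} {V : Set Q.carrier}

lemma grayBd_subset_grayBd_succ (hU : IsClosedSpherical P n U) (hV : IsClosedSpherical Q m V)
    (k : ℕ) (α β : Bool) : grayBd P Q k β U V ⊆ grayBd P Q (k + 1) α U V := by
  rintro z ⟨i, j, rfl, h₁, h₂⟩
  by_cases hβ : β = α
  · subst hβ
    exact ⟨i, j + 1, by omega, h₁, hV.bd_subset_bd_succ j _ _ h₂⟩
  · refine ⟨i + 1, j, by omega, hU.bd_subset_bd_succ i β α h₁, ?_⟩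
    rwa [twist_succ, ← twist_not, ← Bool.eq_not_of_ne hβ]

lemma mem_grayBd_of_lt (hV : IsClosedSpherical Q m V) {k i i' j' : ℕ} {α : Bool}
    {z : P.carrier × Q.carrier} (hii' : i < i') (hk : i' + j' = k + 1)
    (h₁ : z.1 ∈ P.bd i α U) (h₂ : z.2 ∈ Q.bd j' (twist i' (!α)) V) :
    z ∈ grayBd P Q k α U V := by
  refine ⟨i, k - i, by omega, h₁, ?_⟩
  rcases (show j' ≤ k - i by omega).lt_or_eq with hlt | heq
  · exact hV.bd_subset_bd hlt _ _ h₂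
  · obtain rfl : i' = i + 1 := by omega
    rwa [twist_succ, twist_not, Bool.not_not, heq] at h₂

lemma exists_mem_grayBd_of_mem_inter (hU : IsClosedSpherical P n U)
    (hV : IsClosedSpherical Q m V) {k i j : ℕ} {z : P.carrier × Q.carrier}
    (hk : i + j = k + 1) (hkn : k + 1 < n + m)
    (h₁p : z.1 ∈ P.bd i true U) (h₁n : z.1 ∈ P.bd i false U) (h₂ : ∀ γ, z.2 ∈ Q.bd j γ V) :
    ∃ γ, z ∈ grayBd P Q k γ U V := by
  by_cases hi : i < n
  · obtain ⟨i', rfl, γ, h₁⟩ := hU.exists_mem_bd_pred_of_mem_inter hi h₁p h₁n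
    exact ⟨γ, i', j, by omega, h₁, h₂ _⟩
  · obtain ⟨j', rfl, δ, h₂'⟩ :=
      hV.exists_mem_bd_pred_of_mem_inter (by omega) (h₂ true) (h₂ false)
    refine ⟨twist i δ, i, j', by omega, ?_, by rwa [twist_twist]⟩
    rw [hU.bd_eq_self (not_lt.mp hi)]
    exact hU.isClosed.bd_subset i true h₁p

lemma grayBd_succ_inter_grayBd_succ (hU : IsClosedSpherical P n U)
    (hV : IsClosedSpherical Q m V) {k : ℕ} (hkn : k + 1 < n + m) :
    grayBd P Q (k + 1) true U V ∩ grayBd P Q (k + 1) false U V =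
      grayBd P Q k true U V ∪ grayBd P Q k false U V := by
  have up := grayBd_subset_grayBd_succ hU hV k
  refine subset_antisymm ?_ (Set.union_subset (Set.subset_inter (up _ _) (up _ _))
    (Set.subset_inter (up _ _) (up _ _)))
  rintro z ⟨⟨i, j, hij, h₁, h₂⟩, ⟨i', j', hij', h₁', h₂'⟩⟩
  rcases lt_trichotomy i i' with hlt | rfl | hgt
  · exact Or.inl (mem_grayBd_of_lt hV hlt hij' h₁ h₂')
  · obtain rfl : j' = j := by omega
    obtain ⟨γ, hγ⟩ := exists_mem_grayBd_of_mem_inter hU hV hij hkn h₁ h₁'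
      (forall_of_twist_true_of_twist_false i h₂ h₂')
    cases γ
    exacts [Or.inr hγ, Or.inl hγ]
  · exact Or.inr (mem_grayBd_of_lt hV hgt hij h₁' h₂)

lemma grayBd_zero_inter_grayBd_zero (hU : IsClosedSpherical P n U)
    (hV : IsClosedSpherical Q m V) (hnm : 0 < n + m) :
    grayBd P Q 0 true U V ∩ grayBd P Q 0 false U V = ∅ := by
  refine Set.eq_empty_of_forall_notMem ?_
  rintro z ⟨⟨i, j, hij, h₁, h₂⟩, ⟨i', j', hij', h₁', h₂'⟩⟩
  obtain ⟨rfl, rfl⟩ : i = 0 ∧ j = 0 := by omega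
  obtain ⟨rfl, rfl⟩ : i' = 0 ∧ j' = 0 := by omega
  rcases Nat.eq_zero_or_pos n with rfl | hn
  · obtain ⟨_, h, -⟩ := hV.exists_mem_bd_pred_of_mem_inter (by omega) h₂ h₂'
    omega
  · obtain ⟨_, h, -⟩ := hU.exists_mem_bd_pred_of_mem_inter hn h₁ h₁'
    omega

end GrayBd

theorem stmt13_general (P Q : OGP)
    (U : Set P.carrier) (V : Set Q.carrier) (n m : ℕ)
    (hU : IsMolecule P U) (hV : IsMolecule Q V)
    (hUd : ∀ x ∈ U, P.dim x ≤ n)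
    (hVd : ∀ y ∈ V, Q.dim y ≤ m)
    (hsU : HasSphericalBoundary P n U) (hsV : HasSphericalBoundary Q m V) :
    HasSphericalBoundary (gray P Q) (n + m) (U ×ˢ V) := by
  have hU' : IsClosedSpherical P n U := ⟨hU.isClosed, hUd, hsU⟩
  have hV' : IsClosedSpherical Q m V := ⟨hV.isClosed, hVd, hsV⟩
  simp only [HasSphericalBoundary, gray_bd_eq_grayBd hU' hV']
  refine ⟨fun k hk hkn => ?_, grayBd_zero_inter_grayBd_zero hU' hV'⟩
  obtain ⟨k, rfl⟩ := Nat.exists_eq_add_of_lt hk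
  exact grayBd_succ_inter_grayBd_succ hU' hV' hkn

/-- the Gray product of molecules with spherical boundary has
spherical boundary. -/
theorem stmt13 (P Q : OGP) (hP : IsRegularDC P) (hQ : IsRegularDC Q)
    (U : Set P.carrier) (V : Set Q.carrier) (n m : ℕ)
    (hU : IsMolecule P U) (hV : IsMolecule Q V)
    (hUd : ∀ x ∈ U, P.dim x ≤ n) (hUe : ∃ x ∈ U, P.dim x = n)
    (hVd : ∀ y ∈ V, Q.dim y ≤ m) (hVe : ∃ y ∈ V, Q.dim y = m)
    (hsU : HasSphericalBoundary P n U) (hsV : HasSphericalBoundary Q m V) :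
    HasSphericalBoundary (gray P Q) (n + m) (U ×ˢ V) :=
  stmt13_general P Q U V n m hU hV hUd hVd hsU hsV
end
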